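/- arXiv:1206.0247 — 4 statements merged into one kernel-verified Lean document; each statement's English description precedes it below -/
import Mathlib

section
/- For every positive integer d and every vector (s_1, ..., s_n) of positive integers, if (d·s_1, ..., d·s_n) ∈ S_q(I) then (s_1, ..., s_n) ∈ S_q(I); that is, S_q(I) is a truncation set in ℕ^n. -/
/-- `S_q(I)` is a truncation set in `ℕ^n`: if `(d·s_1, …, d·s_n) ∈ S_q(I)` then
`(s_1, …, s_n) ∈ S_q(I)`.  Membership of a vector of positive integers `s` in
`S_q(I)` means `∑_i ⌊(s_i − 1)/(a_i^{χ_I(i)})⌋ ≤ q − 1`. -/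
theorem stmt_1 (n : ℕ) (a : Fin n → ℕ) (ha : ∀ i, 0 < a i) (q : ℕ) (hq : 0 < q)
    (I : Finset (Fin n)) (d : ℕ) (hd : 0 < d) (s : Fin n → ℕ) (hs : ∀ i, 0 < s i)
    (h : ∑ i, (d * s i - 1) / (a i ^ (if i ∈ I then 1 else 0)) ≤ q - 1) :
    ∑ i, (s i - 1) / (a i ^ (if i ∈ I then 1 else 0)) ≤ q - 1 := by
  refine le_trans (Finset.sum_le_sum fun i _ => ?_) h
  exact Nat.div_le_div_right (Nat.sub_le_sub_right (Nat.le_mul_of_pos_left _ hd) 1)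
end

section
/- The set S_q(I) is finite and its cardinality is |S_q(I)| = C(n + q − 1, n) · ∏_{i ∈ I} a_i, where C(n + q − 1, n) is the binomial coefficient. -/
open Finset

/-- Tuples in `Fin n → ℕ` with all entries `≤ k` and sum `≤ k`. -/
def Ftup (n k : ℕ) : Finset (Fin n → ℕ) :=
  (Fintype.piFinset fun _ => Finset.range (k + 1)).filter fun t => ∑ i, t i ≤ k

lemma mem_Ftup {n k : ℕ} {t : Fin n → ℕ} :
    t ∈ Ftup n k ↔ (∀ i, t i ≤ k) ∧ ∑ i, t i ≤ k := by
  simp [Ftup, Nat.lt_succ_iff]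

lemma card_Ftup : ∀ n k, (Ftup n k).card = (n + k).choose n
  | 0, k => by
    rw [Ftup, filter_true_of_mem (by intro t _; simp)]
    simp
  | (n + 1), k => by
    have hcard : ((range (k + 1)).sigma fun j => Ftup n (k - j)).card
        = (Ftup (n + 1) k).card := by
      refine Finset.card_bij' (fun p _ => Fin.cons p.1 p.2)
        (fun s _ => ⟨s 0, Fin.tail s⟩) ?_ ?_ ?_ ?_
      · rintro ⟨j, t⟩ hp
        simp only [mem_sigma, mem_range, Nat.lt_succ_iff] at hp
        obtain ⟨hj, ht⟩ := hp
        dsimp only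
        rw [mem_Ftup] at ht ⊢
        constructor
        · intro i
          refine Fin.cases ?_ ?_ i
          · simpa using hj
          · intro i; simpa using (ht.1 i).trans (Nat.sub_le _ _)
        · rw [Fin.sum_cons]
          omega
      · intro s hs
        rw [mem_Ftup] at hs
        have hsum : s 0 + ∑ i, Fin.tail s i ≤ k := by
          have h0 : ∑ i : Fin (n + 1), s i = s 0 + ∑ i : Fin n, Fin.tail s i :=
            Fin.sum_univ_succ s
          omega
        simp only [mem_sigma, mem_range, Nat.lt_succ_iff, mem_Ftup]
        refine ⟨by omega, ?_, by omega⟩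
        intro i
        have : Fin.tail s i ≤ ∑ j, Fin.tail s j :=
          Finset.single_le_sum (fun j _ => Nat.zero_le _) (mem_univ i)
        omega
      · rintro ⟨j, t⟩ _
        simp [Fin.tail_cons]
      · intro s _
        exact Fin.cons_self_tail s
    rw [← hcard, Finset.card_sigma]
    have h1 : ∀ j ∈ range (k + 1), (Ftup n (k - j)).card = (n + (k - j)).choose n :=
      fun j _ => card_Ftup n (k - j)
    rw [Finset.sum_congr rfl h1]
    have h2 : ∑ j ∈ range (k + 1), (n + (k - j)).choose n
        = ∑ j ∈ range (k + 1), (n + j).choose n := by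
      rw [← Finset.sum_range_reflect]
      apply Finset.sum_congr rfl
      intro j hj
      simp only [mem_range, Nat.lt_succ_iff] at hj
      congr 1
      omega
    rw [h2]
    have h3 : ∑ j ∈ range (k + 1), (n + j).choose n
        = ∑ j ∈ range (k + 1), (j + n).choose n := by
      apply Finset.sum_congr rfl; intro j _; rw [Nat.add_comm]
    rw [h3, Nat.sum_range_add_choose k n]
    congr 1
    omega

/-- The truncation set `S_q(I)` is finite, of cardinality
`C(n + q − 1, n) · ∏_{i ∈ I} a_i`. -/
theorem stmt_2 (n : ℕ) (a : Fin n → ℕ) (ha : ∀ i, 0 < a i) (q : ℕ) (hq : 0 < q)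
    (I : Finset (Fin n))
    (S : Set (Fin n → ℕ))
    (hS : S = {s : Fin n → ℕ |
      (∀ i, 0 < s i) ∧ ∑ i, (s i - 1) / (a i ^ (if i ∈ I then 1 else 0)) ≤ q - 1}) :
    S.Finite ∧ S.ncard = Nat.choose (n + q - 1) n * ∏ i ∈ I, a i := by
  set b : Fin n → ℕ := fun i => a i ^ (if i ∈ I then 1 else 0) with hbdef
  have hb : ∀ i, 0 < b i := fun i => pow_pos (ha i) _
  set P : Finset ((Fin n → ℕ) × (Fin n → ℕ)) :=
    (Ftup n (q - 1)) ×ˢ Fintype.piFinset fun i => Finset.range (b i) with hPdef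
  set g : (Fin n → ℕ) × (Fin n → ℕ) → (Fin n → ℕ) :=
    fun p i => b i * p.1 i + p.2 i + 1 with hgdef
  have hgdiv : ∀ (p : (Fin n → ℕ) × (Fin n → ℕ)), (∀ i, p.2 i < b i) →
      ∀ i, (g p i - 1) / b i = p.1 i := by
    intro p hp i
    simp only [hgdef, Nat.add_sub_cancel]
    rw [Nat.mul_add_div (hb i), Nat.div_eq_of_lt (hp i), Nat.add_zero]
  have hgmod : ∀ (p : (Fin n → ℕ) × (Fin n → ℕ)), (∀ i, p.2 i < b i) →
      ∀ i, (g p i - 1) % b i = p.2 i := by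
    intro p hp i
    simp only [hgdef, Nat.add_sub_cancel]
    rw [Nat.mul_add_mod, Nat.mod_eq_of_lt (hp i)]
  have hSG : S = ↑(P.image g) := by
    ext s
    simp only [hS, Set.mem_setOf_eq, coe_image, Set.mem_image, mem_coe, hPdef,
      mem_product, Fintype.mem_piFinset, mem_range]
    constructor
    · rintro ⟨hpos, hsum⟩
      refine ⟨⟨fun i => (s i - 1) / b i, fun i => (s i - 1) % b i⟩,
        ⟨?_, fun i => Nat.mod_lt _ (hb i)⟩, ?_⟩
      · rw [mem_Ftup]
        refine ⟨fun i => ?_, hsum⟩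
        exact le_trans (Finset.single_le_sum
          (f := fun j => (s j - 1) / b j) (fun j _ => Nat.zero_le _) (mem_univ i)) hsum
      · funext i
        simp only [hgdef]
        rw [Nat.div_add_mod]
        have := hpos i
        omega
    · rintro ⟨p, ⟨hpF, hpr⟩, rfl⟩
      rw [mem_Ftup] at hpF
      constructor
      · intro i; simp [hgdef]
      · have : ∀ i, (g p i - 1) / b i = p.1 i := hgdiv p hpr
        calc ∑ i, (g p i - 1) / b i = ∑ i, p.1 i := by
              exact Finset.sum_congr rfl fun i _ => this i
          _ ≤ q - 1 := hpF.2
  have hinj : Set.InjOn g ↑P := by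
    intro p hp p' hp' he
    simp only [hPdef, coe_product, Set.mem_prod, mem_coe, Fintype.mem_piFinset,
      mem_range] at hp hp'
    have h1 : p.1 = p'.1 := by
      funext i
      rw [← hgdiv p hp.2 i, ← hgdiv p' hp'.2 i, he]
    have h2 : p.2 = p'.2 := by
      funext i
      rw [← hgmod p hp.2 i, ← hgmod p' hp'.2 i, he]
    exact Prod.ext h1 h2
  constructor
  · rw [hSG]; exact (P.image g).finite_toSet
  · rw [hSG, Set.ncard_coe_finset, Finset.card_image_of_injOn hinj, hPdef,
      Finset.card_product, card_Ftup, Fintype.card_piFinset]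
    have hprod : ∏ i, (range (b i)).card = ∏ i ∈ I, a i := by
      simp only [card_range, hbdef]
      have : ∀ i ∈ univ, a i ^ (if i ∈ I then 1 else 0) = if i ∈ I then a i else 1 := by
        intro i _; split <;> simp
      rw [Finset.prod_congr rfl this, Finset.prod_ite_mem, Finset.univ_inter]
    rw [hprod]
    congr 2
    omega
end

section
/- Given positive integers s_1, s_2, and a, let g = gcd(s_1, s_2) and write a = d·e where e·g = gcd(s_1, a·s_2) (so e = gcd(s_1, a·s_2)/g and d = a/e, both positive integers). Then there exist matrices A, B, B', C in GL_2(ℤ) such that: A·(s_1, s_2)^T = (g, 0)^T; B·(s_1, e·s_2)^T = (e·g, 0)^T; B'·(s_1, e·s_2)^T = (e·g, 0)^T; C·(s_1, a·s_2)^T = (e·g, 0)^T; and moreover diag(e, 1)·A = B·diag(1, e) and diag(1, d)·B' = C·diag(1, d) as 2×2 integer matrices. -/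
open Matrix

/-! Write `s₁ = e·g·n` and `s₂ = g·m`. Dividing the gcds out leaves the coprime pairs `(e·n, m)` and
`(n, d·m)`, and a coprime pair `(x, y)` with Bézout relation `p·x + q·y = 1` gives the matrix
`!![p, q; -y, x] ∈ SL₂(ℤ)`, which sends `(k·x, k·y)` to `(k, 0)`. With Bézout coefficients `p, q`
of `(e·n, m)` and `u, v` of `(n, d·m)`, the four matrices are the ones built from
`(p, q, e·n, m)`, `(e·p, q, n, m)`, `(u, d·v, n, m)` and `(u, v, n, d·m)`, and the two intertwining
relations are entrywise identities. -/

theorem Nat.Coprime.of_gcd_mul_eq {k x y : ℕ} (hk : 0 < k) (h : Nat.gcd (k * x) (k * y) = k) :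
    Nat.Coprime x y := by
  rwa [Nat.gcd_mul_left, Nat.mul_eq_left hk.ne'] at h

theorem exists_bezout_of_gcd_mul_eq {k x y : ℕ} (hk : 0 < k) (h : Nat.gcd (k * x) (k * y) = k) :
    ∃ p q : ℤ, p * x + q * y = 1 :=
  Nat.isCoprime_iff_coprime.mpr (Nat.Coprime.of_gcd_mul_eq hk h)

def bezoutMatrix (p q x y : ℤ) : Matrix (Fin 2) (Fin 2) ℤ := !![p, q; -y, x]

theorem det_bezoutMatrix (p q x y : ℤ) : (bezoutMatrix p q x y).det = p * x + q * y := by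
  rw [bezoutMatrix, det_fin_two_of]
  ring

theorem bezoutMatrix_mulVec {p q x y : ℤ} (h : p * x + q * y = 1) (k : ℤ) :
    bezoutMatrix p q x y *ᵥ ![k * x, k * y] = ![k, 0] := by
  ext i
  fin_cases i
  · simp [bezoutMatrix]
    linear_combination k * h
  · simp [bezoutMatrix]
    ring

theorem diagonal_mul_bezoutMatrix_of_mul_right (c p q x y : ℤ) :
    diagonal ![c, 1] * bezoutMatrix p q (c * x) y =
      bezoutMatrix (c * p) q x y * diagonal ![1, c] := by
  ext i j
  fin_cases i <;> fin_cases j <;> simp [bezoutMatrix] <;> ring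

theorem diagonal_mul_bezoutMatrix_of_mul_left (c p q x y : ℤ) :
    diagonal ![1, c] * bezoutMatrix p (c * q) x y =
      bezoutMatrix p q x (c * y) * diagonal ![1, c] := by
  ext i j
  fin_cases i <;> fin_cases j <;> simp [bezoutMatrix] <;> ring

def bezoutGL {p q x y : ℤ} (h : p * x + q * y = 1) : GL (Fin 2) ℤ :=
  SpecialLinearGroup.toGL ⟨bezoutMatrix p q x y, (det_bezoutMatrix p q x y).trans h⟩

@[simp]
theorem coe_bezoutGL {p q x y : ℤ} (h : p * x + q * y = 1) :
    (bezoutGL h : Matrix (Fin 2) (Fin 2) ℤ) = bezoutMatrix p q x y :=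
  rfl

theorem stmt_6_general (s₁ s₂ a : ℕ) (hs₁ : 0 < s₁)
    (g e d : ℕ) (hg : g = Nat.gcd s₁ s₂) (he : e * g = Nat.gcd s₁ (a * s₂))
    (hd : a = d * e) :
    ∃ A B B' C : GL (Fin 2) ℤ,
      (A : Matrix (Fin 2) (Fin 2) ℤ).mulVec ![(s₁ : ℤ), (s₂ : ℤ)] = ![(g : ℤ), 0] ∧
      (B : Matrix (Fin 2) (Fin 2) ℤ).mulVec ![(s₁ : ℤ), (e : ℤ) * s₂] = ![(e : ℤ) * g, 0] ∧
      (B' : Matrix (Fin 2) (Fin 2) ℤ).mulVec ![(s₁ : ℤ), (e : ℤ) * s₂] = ![(e : ℤ) * g, 0] ∧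
      (C : Matrix (Fin 2) (Fin 2) ℤ).mulVec ![(s₁ : ℤ), (a : ℤ) * s₂] = ![(e : ℤ) * g, 0] ∧
      Matrix.diagonal ![(e : ℤ), 1] * (A : Matrix (Fin 2) (Fin 2) ℤ) =
        (B : Matrix (Fin 2) (Fin 2) ℤ) * Matrix.diagonal ![1, (e : ℤ)] ∧
      Matrix.diagonal ![1, (d : ℤ)] * (B' : Matrix (Fin 2) (Fin 2) ℤ) =
        (C : Matrix (Fin 2) (Fin 2) ℤ) * Matrix.diagonal ![1, (d : ℤ)] := by
  obtain ⟨m, rfl⟩ : g ∣ s₂ := hg ▸ Nat.gcd_dvd_right _ _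
  obtain ⟨n, rfl⟩ : e * g ∣ s₁ := he ▸ Nat.gcd_dvd_left _ _
  subst hd
  have hg_pos : 0 < g := hg ▸ Nat.gcd_pos_of_pos_left _ hs₁
  have heg_pos : 0 < e * g := he ▸ Nat.gcd_pos_of_pos_left _ hs₁
  obtain ⟨p, q, hpq⟩ := exists_bezout_of_gcd_mul_eq (x := e * n) (y := m) hg_pos <| by
    convert hg.symm using 2; ring
  obtain ⟨u, v, huv⟩ := exists_bezout_of_gcd_mul_eq (x := n) (y := d * m) heg_pos <| by
    convert he.symm using 2; ring
  push_cast at hpq huv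
  have hB : (e * p : ℤ) * n + q * m = 1 := by linear_combination hpq
  have hB' : (u : ℤ) * n + (d * v) * m = 1 := by linear_combination huv
  refine ⟨bezoutGL hpq, bezoutGL hB, bezoutGL hB', bezoutGL huv, ?_, ?_, ?_, ?_, ?_, ?_⟩
  · simpa [mul_comm, mul_left_comm, mul_assoc] using bezoutMatrix_mulVec hpq g
  · simpa [mul_comm, mul_left_comm, mul_assoc] using bezoutMatrix_mulVec hB (e * g)
  · simpa [mul_comm, mul_left_comm, mul_assoc] using bezoutMatrix_mulVec hB' (e * g)
  · simpa [mul_comm, mul_left_comm, mul_assoc] using bezoutMatrix_mulVec huv (e * g)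
  · simpa using diagonal_mul_bezoutMatrix_of_mul_right e p q n m
  · simpa using diagonal_mul_bezoutMatrix_of_mul_left d u v n m

/-- The matrix form of the Euclidean-algorithm lemma: there are matrices
`A, B, B', C ∈ GL₂(ℤ)` taking `(s₁, s₂)ᵀ ↦ (g, 0)ᵀ`, `(s₁, e·s₂)ᵀ ↦ (e·g, 0)ᵀ`
(twice) and `(s₁, a·s₂)ᵀ ↦ (e·g, 0)ᵀ`, with
`diag(e,1)·A = B·diag(1,e)` and `diag(1,d)·B' = C·diag(1,d)`. -/
theorem stmt_6 (s₁ s₂ a : ℕ) (hs₁ : 0 < s₁) (hs₂ : 0 < s₂) (ha : 0 < a)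
    (g e d : ℕ) (hg : g = Nat.gcd s₁ s₂) (he : e * g = Nat.gcd s₁ (a * s₂))
    (hd : a = d * e) :
    ∃ A B B' C : GL (Fin 2) ℤ,
      (A : Matrix (Fin 2) (Fin 2) ℤ).mulVec ![(s₁ : ℤ), (s₂ : ℤ)] = ![(g : ℤ), 0] ∧
      (B : Matrix (Fin 2) (Fin 2) ℤ).mulVec ![(s₁ : ℤ), (e : ℤ) * s₂] = ![(e : ℤ) * g, 0] ∧
      (B' : Matrix (Fin 2) (Fin 2) ℤ).mulVec ![(s₁ : ℤ), (e : ℤ) * s₂] = ![(e : ℤ) * g, 0] ∧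
      (C : Matrix (Fin 2) (Fin 2) ℤ).mulVec ![(s₁ : ℤ), (a : ℤ) * s₂] = ![(e : ℤ) * g, 0] ∧
      Matrix.diagonal ![(e : ℤ), 1] * (A : Matrix (Fin 2) (Fin 2) ℤ) =
        (B : Matrix (Fin 2) (Fin 2) ℤ) * Matrix.diagonal ![1, (e : ℤ)] ∧
      Matrix.diagonal ![1, (d : ℤ)] * (B' : Matrix (Fin 2) (Fin 2) ℤ) =
        (C : Matrix (Fin 2) (Fin 2) ℤ) * Matrix.diagonal ![1, (d : ℤ)] :=
  stmt_6_general s₁ s₂ a hs₁ g e d hg he hd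
end

section
/- Let S be a truncation set in ℕ^n, let s = (s_1, ..., s_n) be a vector of positive integers with gcd(s_1, ..., s_n) = 1, and let S' = {m·s : m a positive integer and m·s ∈ S}. Fix an index i ∈ {1, ..., n} and an integer r ≥ 2; set d = gcd(s_i, r) and e = r/d, and define the vector v by v_j = e·s_j for j ≠ i and v_i = s_i/d. Then for every vector t = (t_1, ..., t_n) of positive integers: (t_1, ..., t_{i−1}, r·t_i, t_{i+1}, ..., t_n) ∈ S' if and only if there exists a positive integer m with t = m·v and m·e·s ∈ S. (This identifies the truncation set S'/(1,...,r,...,1) with the one-dimensional truncation set S'/e.) -/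
/-- Identifying the truncation set `S'/(1,…,r,…,1)` with the one-dimensional
truncation set `S'/e`.  Here `S` is a truncation set in `ℕ^n`, `s` is a
primitive vector of positive integers, `S' = ℕs ∩ S`, `d = gcd(s_i, r)`,
`e = r/d` and `v = (e·s_1, …, s_i/d, …, e·s_n)`.  For every vector `t` of
positive integers, `(t_1, …, r·t_i, …, t_n) ∈ S'` iff `t = m·v` for some
positive integer `m` with `m·e·s ∈ S`. -/
theorem stmt_7 (n : ℕ) (S : Set (Fin n → ℕ))
    (htrunc : ∀ c : ℕ, 0 < c → ∀ u : Fin n → ℕ, (fun j => c * u j) ∈ S → u ∈ S)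
    (s : Fin n → ℕ) (hs : ∀ j, 0 < s j) (hgcd : Finset.univ.gcd s = 1)
    (S' : Set (Fin n → ℕ))
    (hS' : S' = {x | ∃ m : ℕ, 0 < m ∧ x = (fun j => m * s j) ∧ (fun j => m * s j) ∈ S})
    (i : Fin n) (r : ℕ) (hr : 2 ≤ r)
    (d e : ℕ) (hd : d = Nat.gcd (s i) r) (he : e = r / d)
    (v : Fin n → ℕ) (hv : v = fun j => if j = i then s i / d else e * s j)
    (t : Fin n → ℕ) (ht : ∀ j, 0 < t j) :
    Function.update t i (r * t i) ∈ S' ↔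
      ∃ m : ℕ, 0 < m ∧ t = (fun j => m * v j) ∧ (fun j => m * e * s j) ∈ S := by
  subst hS' hd he hv
  set d := Nat.gcd (s i) r with hd
  have hdpos : 0 < d := Nat.gcd_pos_of_pos_left r (hs i)
  have hdr : d ∣ r := Nat.gcd_dvd_right _ _
  have hds : d ∣ s i := Nat.gcd_dvd_left _ _
  have hre : r = d * (r / d) := (Nat.mul_div_cancel' hdr).symm
  have hsa : s i = d * (s i / d) := (Nat.mul_div_cancel' hds).symm
  have hepos : 0 < r / d := Nat.div_pos (Nat.le_of_dvd (by omega) hdr) hdpos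
  have cop : Nat.Coprime (s i / d) (r / d) := Nat.coprime_div_gcd_div_gcd hdpos
  constructor
  · rintro ⟨M, hM, heq, hmem⟩
    have hi : r * t i = M * s i := by
      have := congrFun heq i
      simpa [Function.update_self] using this
    have hj : ∀ j, j ≠ i → t j = M * s j := by
      intro j hji
      have := congrFun heq j
      simpa [Function.update_of_ne hji] using this
    -- e * t i = M * a  where a = s i / d
    have key : (r / d) * t i = M * (s i / d) := by
      have h2 : d * ((r / d) * t i) = d * (M * (s i / d)) := by
        calc d * ((r / d) * t i) = (d * (r / d)) * t i := by ring
        _ = r * t i := by rw [← hre]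
        _ = M * s i := hi
        _ = M * (d * (s i / d)) := by rw [← hsa]
        _ = d * (M * (s i / d)) := by ring
      exact Nat.eq_of_mul_eq_mul_left hdpos h2
    have hdvd : (r / d) ∣ M := by
      have : (r / d) ∣ M * (s i / d) := ⟨t i, by omega⟩
      exact (Nat.Coprime.dvd_of_dvd_mul_right (cop.symm) this)
    obtain ⟨m, hMm⟩ := hdvd
    have hmpos : 0 < m := by
      rcases Nat.eq_zero_or_pos m with h | h
      · subst h; omega
      · exact h
    refine ⟨m, hmpos, ?_, ?_⟩
    · funext j
      by_cases hji : j = i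
      · subst hji
        simp only [if_pos rfl]
        have : (r / d) * t j = (r / d) * (m * (s j / d)) := by
          rw [key, hMm]; ring
        exact Nat.eq_of_mul_eq_mul_left hepos this
      · simp only [if_neg hji]
        rw [hj j hji, hMm]; ring
    · convert hmem using 2 with j
      rw [hMm]; ring
  · rintro ⟨m, hm, hteq, hmem⟩
    refine ⟨m * (r / d), by positivity, ?_, ?_⟩
    · funext j
      by_cases hji : j = i
      · subst hji
        have hti : t j = m * (s j / d) := by rw [hteq]; simp
        rw [Function.update_self, hti]
        calc r * (m * (s j / d)) = (r / d * d) * (m * (s j / d)) := by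
              rw [Nat.div_mul_cancel hdr]
          _ = m * (r / d) * (d * (s j / d)) := by ring
          _ = m * (r / d) * s j := by rw [← hsa]
      · rw [Function.update_of_ne hji, hteq]
        simp only [if_neg hji]
        ring
    · exact hmem
end
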